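/- arXiv:2009.13260 — 4 statements merged into one kernel-verified Lean document; each statement's English description precedes it below -/
import Mathlib

section
/- Let A be a UTA all of whose atomic constraints in guards use the weak inequality ≤, let M be the maximum constant occurring in the guards of A, let L be the maximum absolute value of a constant occurring in the updates of A (0 if none), and let G be the smallest reduced G-map of A. Then G assigns an infinite set to some state if and only if there exist a state q and an atomic constraint φ ∈ G(q) whose constant c_φ satisfies c_φ > max(M, L) + 2·L·|Q|·|X|². -/
open Classical

/-- Comparison operator `◁ ∈ {<, ≤}`. -/
inductive Ineq where
  | lt
  | le

def Ineq.holds : Ineq → ℝ → ℝ → Prop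
  | .lt, a, b => a < b
  | .le, a, b => a ≤ b

/-- Atomic constraints over a set `X` of clocks. -/
inductive AC (X : Type) where
  | tt
  | ff
  | upper (x : X) (o : Ineq) (c : ℕ)              -- x ◁ c
  | lower (c : ℕ) (o : Ineq) (x : X)              -- c ◁ x
  | dUpper (x y : X) (o : Ineq) (c : ℕ)           -- x - y ◁ c
  | dLower (c : ℕ) (o : Ineq) (x y : X)           -- c ◁ x - y

/-- A valuation maps clocks to nonnegative reals. -/
abbrev Val (X : Type) := X → NNReal

def AC.sat {X : Type} (v : Val X) : AC X → Prop
  | .tt => True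
  | .ff => False
  | .upper x o c => o.holds (v x : ℝ) (c : ℝ)
  | .lower c o x => o.holds (c : ℝ) (v x : ℝ)
  | .dUpper x y o c => o.holds ((v x : ℝ) - (v y : ℝ)) (c : ℝ)
  | .dLower c o x y => o.holds (c : ℝ) ((v x : ℝ) - (v y : ℝ))

/-- A constraint (guard) is a finite conjunction of atomic constraints. -/
abbrev Guard (X : Type) := List (AC X)

def satG {X : Type} (v : Val X) (g : Guard X) : Prop := ∀ φ ∈ g, AC.sat v φ

/-- The valuation `v + δ`. -/
def delay {X : Type} (v : Val X) (δ : NNReal) : Val X := fun x => v x + δ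

/-- `v ⊑_G v'` for a set `G` of atomic constraints. -/
def simS {X : Type} (G : Set (AC X)) (v v' : Val X) : Prop :=
  ∀ δ : NNReal, ∀ φ ∈ G, AC.sat (delay v δ) φ → AC.sat (delay v' δ) φ

/-- `v ⊑_φ v'` for a single constraint `φ` (a conjunction of atomic constraints). -/
def simC {X : Type} (g : Guard X) (v v' : Val X) : Prop :=
  ∀ δ : NNReal, satG (delay v δ) g → satG (delay v' δ) g

/-- Right-hand side of an atomic update: `x := c` or `x := y + d`. -/
inductive Rhs (X : Type) where
  | const (c : ℕ)
  | clock (y : X) (d : ℤ)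

/-- An update assigns a right-hand side to every clock. -/
abbrev Update (X : Type) := X → Rhs X

def Rhs.eval {X : Type} (v : Val X) : Rhs X → ℝ
  | .const c => (c : ℝ)
  | .clock y d => (v y : ℝ) + (d : ℝ)

/-- `up(v) ≥ 0`. -/
def Update.nonneg {X : Type} (up : Update X) (v : Val X) : Prop :=
  ∀ x, 0 ≤ Rhs.eval v (up x)

/-- The valuation `up(v)` (meaningful when `up.nonneg v`). -/
noncomputable def Update.app {X : Type} (up : Update X) (v : Val X) : Val X :=
  fun x => Real.toNNReal (Rhs.eval v (up x))

/-- `up⁻¹(φ)` for an atomic constraint `φ`: simultaneous substitution of `up_x` for `x`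
rewritten to an equivalent atomic constraint (possibly ⊤ or ⊥). -/
noncomputable def upInvA {X : Type} (up : Update X) : AC X → AC X
  | .tt => .tt
  | .ff => .ff
  | .upper x o c =>
      match up x with
      | .const a => if o.holds (a : ℝ) (c : ℝ) then .tt else .ff
      | .clock y d => if (c : ℤ) - d < 0 then .ff else .upper y o ((c : ℤ) - d).toNat
  | .lower c o x =>
      match up x with
      | .const a => if o.holds (c : ℝ) (a : ℝ) then .tt else .ff
      | .clock y d => if (c : ℤ) - d < 0 then .tt else .lower ((c : ℤ) - d).toNat o y
  | .dUpper x y o c =>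
      match up x, up y with
      | .const a, .const b => if o.holds ((a : ℝ) - (b : ℝ)) (c : ℝ) then .tt else .ff
      | .const a, .clock z e =>
          if (a : ℤ) - e - (c : ℤ) < 0 then .tt
          else .lower ((a : ℤ) - e - (c : ℤ)).toNat o z
      | .clock z e, .const b =>
          if (c : ℤ) + (b : ℤ) - e < 0 then .ff
          else .upper z o ((c : ℤ) + (b : ℤ) - e).toNat
      | .clock z e, .clock w f =>
          if (c : ℤ) - e + f < 0 then .dLower (-((c : ℤ) - e + f)).toNat o w z
          else .dUpper z w o ((c : ℤ) - e + f).toNat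
  | .dLower c o x y =>
      match up x, up y with
      | .const a, .const b => if o.holds (c : ℝ) ((a : ℝ) - (b : ℝ)) then .tt else .ff
      | .const a, .clock z e =>
          if (a : ℤ) - e - (c : ℤ) < 0 then .ff
          else .upper z o ((a : ℤ) - e - (c : ℤ)).toNat
      | .clock z e, .const b =>
          if (c : ℤ) + (b : ℤ) - e < 0 then .tt
          else .lower ((c : ℤ) + (b : ℤ) - e).toNat o z
      | .clock z e, .clock w f =>
          if (c : ℤ) - e + f < 0 then .dUpper w z o (-((c : ℤ) - e + f)).toNat
          else .dLower ((c : ℤ) - e + f).toNat o z w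

/-- `up⁻¹` of a conjunction of atomic constraints. -/
noncomputable def upInvC {X : Type} (up : Update X) (g : Guard X) : Guard X :=
  g.map (upInvA up)

/-- The guard `g` contains an upper-bound constraint `x ◁₁ c` on clock `x`. -/
def hasUpperG {X : Type} (g : Guard X) (x : X) : Prop := ∃ o c, AC.upper x o c ∈ g

/-- The smallest constant of an upper-bound constraint on `x` in `g`. -/
noncomputable def minUpperG {X : Type} (g : Guard X) (x : X) : ℕ :=
  sInf {c | ∃ o, AC.upper x o c ∈ g}

/-- Condition of Case 3 of the table defining `wp`. -/
def case3G {X : Type} (g : Guard X) (x y : X) (d : ℕ) : Prop :=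
  (∃ o c, AC.upper x o c ∈ g ∧ c < d) ∨
  (∃ o c, AC.dUpper x y o c ∈ g ∧ c < d) ∨
  (∃ o e, AC.dLower e o x y ∈ g ∧ d < e)

/-- The pre `wp(φ, g, up)` of an atomic constraint under a guard-update pair. -/
noncomputable def wp {X : Type} (φ : AC X) (g : Guard X) (up : Update X) : AC X :=
  match upInvA up φ with
  | .upper x o d => if hasUpperG g x then .tt else .upper x o d
  | .lower d o x =>
      if hasUpperG g x ∧ minUpperG g x < d then .lower (minUpperG g x) .le x
      else .lower d o x
  | .dUpper x y o d => if case3G g x y d then .tt else .dUpper x y o d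
  | .dLower d o x y => if case3G g x y d then .tt else .dLower d o x y
  | ψ => ψ

/-- A transition of an updatable timed automaton. -/
structure UTrans (Q X : Type) where
  src : Q
  guard : Guard X
  update : Update X
  tgt : Q

/-- An updatable timed automaton (UTA). -/
structure UTA (Q X : Type) where
  init : Q
  trans : List (UTrans Q X)
  acc : Set Q

/-- (Non-reduced) G-map. -/
def IsGMap {Q X : Type} (A : UTA Q X) (G : Q → Set (AC X)) : Prop :=
  ∀ t ∈ A.trans,
    (∀ φ ∈ t.guard, φ ∈ G t.src) ∧
    (∀ x : X, upInvA t.update (AC.lower 0 .le x) ∈ G t.src) ∧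
    (∀ φ ∈ G t.tgt, upInvA t.update φ ∈ G t.src)

/-- Reduced G-map. -/
def IsRedGMap {Q X : Type} (A : UTA Q X) (G : Q → Set (AC X)) : Prop :=
  ∀ t ∈ A.trans,
    (∀ φ ∈ t.guard, φ ∈ G t.src) ∧
    (∀ x : X, wp (AC.lower 0 .le x) t.guard t.update ∈ G t.src) ∧
    (∀ φ ∈ G t.tgt, wp φ t.guard t.update ∈ G t.src)

/-- Pointwise intersection of all G-maps: the smallest G-map. -/
def minGMap {Q X : Type} (A : UTA Q X) : Q → Set (AC X) :=
  fun q => ⋂ G ∈ {G | IsGMap A G}, G q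

/-- Pointwise intersection of all reduced G-maps: the smallest reduced G-map. -/
def minRedGMap {Q X : Type} (A : UTA Q X) : Q → Set (AC X) :=
  fun q => ⋂ G ∈ {G | IsRedGMap A G}, G q

/-- Action transition `(q, v) →t (q', up(v))` of the UTA semantics. -/
def actionStep {Q X : Type} (A : UTA Q X) (t : UTrans Q X) (c c' : Q × Val X) : Prop :=
  t ∈ A.trans ∧ c.1 = t.src ∧ c'.1 = t.tgt ∧ satG c.2 t.guard ∧
  t.update.nonneg c.2 ∧ c'.2 = t.update.app c.2

/-- A simulation on the UTA semantics: a preorder relating only configurations with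
the same state, preserved by delays and actions. -/
def IsSimulation {Q X : Type} (A : UTA Q X)
    (R : (Q × Val X) → (Q × Val X) → Prop) : Prop :=
  (∀ p, R p p) ∧
  (∀ p₁ p₂ p₃, R p₁ p₂ → R p₂ p₃ → R p₁ p₃) ∧
  (∀ p p', R p p' → p.1 = p'.1) ∧
  (∀ q (v v' : Val X) (δ : NNReal), R (q, v) (q, v') → R (q, delay v δ) (q, delay v' δ)) ∧
  (∀ q (v v' : Val X) t p₁, R (q, v) (q, v') → actionStep A t (q, v) p₁ →
      ∃ v₁', actionStep A t (q, v') (p₁.1, v₁') ∧ R p₁ (p₁.1, v₁'))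

/-- A run of a UTA: alternating delays and actions from the initial configuration. -/
def IsRun {Q X : Type} (A : UTA Q X) (n : ℕ) (qs : ℕ → Q) (ds : ℕ → NNReal)
    (vs : ℕ → Val X) : Prop :=
  qs 0 = A.init ∧ (∀ x, vs 0 x = 0) ∧
  ∀ i, i < n → ∃ t, actionStep A t (qs i, delay (vs i) (ds i)) (qs (i + 1), vs (i + 1))

/-- Configurations occurring on some run of the UTA. -/
def ReachCfg {Q X : Type} (A : UTA Q X) (p : Q × Val X) : Prop :=
  ∃ n qs ds vs, IsRun A n qs ds vs ∧ ∃ δ : NNReal, p.1 = qs n ∧ p.2 = delay (vs n) δ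

/-- Timed automaton with subtraction: every atomic update is `x := 0` or `x := x - c`. -/
def IsSubtractionTA {Q X : Type} (A : UTA Q X) : Prop :=
  ∀ t ∈ A.trans, ∀ x : X,
    t.update x = Rhs.const 0 ∨ ∃ c : ℕ, t.update x = Rhs.clock x (-(c : ℤ))

/-- Timed automaton with bounded subtraction with bounds `M`. -/
def IsBoundedSub {Q X : Type} (A : UTA Q X) (M : X → ℕ) : Prop :=
  IsSubtractionTA A ∧
  ∀ q v, ReachCfg A (q, v) → ∀ t ∈ A.trans, t.src = q → satG v t.guard →
    ∀ (x : X) (c : ℕ), 0 < c → t.update x = Rhs.clock x (-(c : ℤ)) → (v x : ℝ) ≤ (M x : ℝ)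

/-- Timed automaton with syntactically bounded subtraction. -/
def IsSynBoundedSub {Q X : Type} (A : UTA Q X) : Prop :=
  IsSubtractionTA A ∧
  ∀ t ∈ A.trans, ∀ (x : X) (c : ℕ), 0 < c → t.update x = Rhs.clock x (-(c : ℤ)) →
    ∃ o c', AC.upper x o c' ∈ t.guard

/-- The constant of an atomic constraint. -/
def AC.cst {X : Type} : AC X → ℕ
  | .tt => 0
  | .ff => 0
  | .upper _ _ c => c
  | .lower c _ _ => c
  | .dUpper _ _ _ c => c
  | .dLower c _ _ _ => c

/-- The constant occurring in the right-hand side of an atomic update. -/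
def Rhs.cst {X : Type} : Rhs X → ℕ
  | .const c => c
  | .clock _ d => d.natAbs

/-- Maximum constant occurring in the guards of a UTA. -/
def maxGuardConst {Q X : Type} (A : UTA Q X) : ℕ :=
  (A.trans.map fun t => (t.guard.map AC.cst).foldr max 0).foldr max 0

/-- Maximum absolute value of a constant occurring in the updates of a UTA. -/
noncomputable def maxUpdateConst {Q X : Type} [Fintype X] (A : UTA Q X) : ℕ :=
  (A.trans.map fun t => Finset.univ.sup fun x => Rhs.cst (t.update x)).foldr max 0

/-- `L(G)(x)`: maximum constant of a lower-bound constraint on `x` in `G` (⊥ = −∞ if none). -/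
noncomputable def Lb {X : Type} (G : Set (AC X)) (x : X) : WithBot ℕ∞ :=
  ⨆ c ∈ {c : ℕ | ∃ o, AC.lower c o x ∈ G}, ((c : ℕ∞) : WithBot ℕ∞)

/-- `U(G)(x)`: maximum constant of an upper-bound constraint on `x` in `G` (⊥ = −∞ if none). -/
noncomputable def Ub {X : Type} (G : Set (AC X)) (x : X) : WithBot ℕ∞ :=
  ⨆ c ∈ {c : ℕ | ∃ o, AC.upper x o c ∈ G}, ((c : ℕ∞) : WithBot ℕ∞)

def AC.isDiag {X : Type} : AC X → Prop
  | .dUpper _ _ _ _ => True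
  | .dLower _ _ _ _ => True
  | _ => False

/-- `G^d`: the diagonal constraints of `G`. -/
def diagOf {X : Type} (G : Set (AC X)) : Set (AC X) := {φ ∈ G | φ.isDiag}

def AC.isWeak {X : Type} : AC X → Prop
  | .upper _ o _ => o = .le
  | .lower _ o _ => o = .le
  | .dUpper _ _ o _ => o = .le
  | .dLower _ o _ _ => o = .le
  | _ => True

/-- All atomic constraints in guards of `A` use the weak inequality `≤`. -/
def weakGuards {Q X : Type} (A : UTA Q X) : Prop :=
  ∀ t ∈ A.trans, ∀ φ ∈ t.guard, φ.isWeak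

/-- A context: an atomic constraint with a hole for the constant. -/
inductive Ctx (X : Type) where
  | upper (x : X)      -- x ≤ ·
  | lower (x : X)      -- · ≤ x
  | dUpper (x y : X)   -- x - y ≤ ·
  | dLower (x y : X)   -- · ≤ x - y

def Ctx.fill {X : Type} : Ctx X → ℕ → AC X
  | .upper x, c => .upper x .le c
  | .lower x, c => .lower c .le x
  | .dUpper x y, c => .dUpper x y .le c
  | .dLower x y, c => .dLower c .le x y

/-- Propagation sequence `(q_i, ctx_i[c_i]) → ⋯ → (q_j, ctx_j[c_j])`. -/
def PropSeq {Q X : Type} (A : UTA Q X) (i j : ℕ) (qs : ℕ → Q) (ctxs : ℕ → Ctx X)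
    (cs : ℕ → ℕ) : Prop :=
  ∀ k, i ≤ k → k < j → ∃ t ∈ A.trans, t.src = qs (k + 1) ∧ t.tgt = qs k ∧
    (ctxs (k + 1)).fill (cs (k + 1)) = wp ((ctxs k).fill (cs k)) t.guard t.update

/-!
Unfold a derivation of `φ ∈ G(q)` into a propagation sequence that starts at a guard constraint
or at some `wp(0 ≤ x, g, up)`, whose constant is at most `K = max(M, L)`, and ends at `φ`. One
`wp` step raises the constant by at most `2L`. On the final stretch where all constants exceed
`K`, the guard-dependent cases of `wp` no longer depend on the constant and `up⁻¹` shifts it by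
a fixed amount, so every step commutes with adding the same `Δ` to both constants. Hence if a
(state, constraint shape) pair recurs on that stretch with a larger constant, the loop between
the two occurrences can be pumped and `G` is infinite. Otherwise the constant can only rise when
a new pair is reached. On the stretch a shape is determined by its two clocks, because the
upper/lower kind is preserved, diagonality spreads backwards and `x - x ≤ c` forwards; so there
are at most `|Q|·|X|²` pairs and the constant stays below `K + 2L·|Q|·|X|²`. Conversely, only
finitely many constraints have a bounded constant.
-/

variable {Q X : Type}

theorem add_le_add_mul_card_of_step_le {κ : Type*} [DecidableEq κ] {c : ℕ → ℕ}
    {f : ℕ → κ} {D a b : ℕ} (T : Finset κ) (hab : a ≤ b)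
    (hT : ∀ k, a ≤ k → k ≤ b → f k ∈ T)
    (hstep : ∀ k, a ≤ k → k < b → c (k + 1) ≤ c k + D)
    (hrep : ∀ k l, a ≤ k → k < l → l ≤ b → f k = f l → c l ≤ c k) :
    c b + D ≤ c a + D * T.card := by
  induction T using Finset.strongInduction generalizing b with
  | H T ih =>
  have hmem : f b ∈ T := hT b hab le_rfl
  obtain ⟨m, hm⟩ := Nat.exists_eq_add_one.mpr (Finset.card_pos.mpr ⟨_, hmem⟩)
  rw [hm, Nat.mul_succ]
  -- jump back from `b` to the first occurrence of its key, then recurse with one key fewer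
  obtain ⟨i, ⟨hai, hfi⟩, hmin⟩ :
      ∃ i, (a ≤ i ∧ f i = f b) ∧ ∀ k < i, ¬ (a ≤ k ∧ f k = f b) :=
    have hex : ∃ i, a ≤ i ∧ f i = f b := ⟨b, hab, rfl⟩
    ⟨_, Nat.find_spec hex, fun k => Nat.find_min hex⟩
  have hib : i ≤ b := not_lt.mp fun hbi => hmin b hbi ⟨hab, rfl⟩
  have hci : c b ≤ c i := by
    rcases hib.lt_or_eq with hib | rfl
    · exact hrep i b hai hib le_rfl hfi
    · exact le_rfl
  rcases hai.lt_or_eq with hai | rfl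
  · have hprev := ih (T.erase (f b)) (Finset.erase_ssubset hmem) (b := i - 1) (by omega)
      (fun k hak hki => Finset.mem_erase.mpr ⟨fun he => hmin k (by omega) ⟨hak, he⟩,
        hT k hak (by omega)⟩)
      (fun k hak hki => hstep k hak (by omega))
      (fun k l hak hkl hli => hrep k l hak hkl (by omega))
    rw [Finset.card_erase_of_mem hmem, hm, Nat.add_sub_cancel] at hprev
    have := hstep (i - 1) (by omega) (by omega)
    rw [Nat.sub_add_cancel (by omega)] at this
    omega
  · omega

theorem AC.finite_setOf_cst_le [Finite X] (B : ℕ) : {φ : AC X | φ.cst ≤ B}.Finite := by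
  have : Finite Ineq :=
    Finite.of_injective (fun o : Ineq => o matches .le) (by rintro (_ | _) (_ | _) <;> simp)
  let F : Bool ⊕ Ineq × Fin (B + 1) × (X ⊕ X × X) × Bool → AC X := fun
    | .inl true => .tt
    | .inl false => .ff
    | .inr (o, c, .inl x, true) => .upper x o c
    | .inr (o, c, .inl x, false) => .lower c o x
    | .inr (o, c, .inr (x, y), true) => .dUpper x y o c
    | .inr (o, c, .inr (x, y), false) => .dLower c o x y
  refine (Set.finite_range F).subset fun φ (hφ : φ.cst ≤ B) => ?_
  have hc : φ.cst < B + 1 := Nat.lt_succ_of_le hφ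
  cases φ with
  | tt => exact ⟨.inl true, rfl⟩
  | ff => exact ⟨.inl false, rfl⟩
  | upper x o c => exact ⟨.inr (o, ⟨c, hc⟩, .inl x, true), rfl⟩
  | lower c o x => exact ⟨.inr (o, ⟨c, hc⟩, .inl x, false), rfl⟩
  | dUpper x y o c => exact ⟨.inr (o, ⟨c, hc⟩, .inr (x, y), true), rfl⟩
  | dLower c o x y => exact ⟨.inr (o, ⟨c, hc⟩, .inr (x, y), false), rfl⟩

/-- Cases 1–3 of `wp`, applied to the constraint `up⁻¹(φ)`. -/
noncomputable def guardReduce (g : Guard X) : AC X → AC X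
  | .upper x o d => if hasUpperG g x then .tt else .upper x o d
  | .lower d o x =>
      if hasUpperG g x ∧ minUpperG g x < d then .lower (minUpperG g x) .le x
      else .lower d o x
  | .dUpper x y o d => if case3G g x y d then .tt else .dUpper x y o d
  | .dLower d o x y => if case3G g x y d then .tt else .dLower d o x y
  | ψ => ψ

theorem wp_eq_guardReduce (φ : AC X) (g : Guard X) (up : Update X) :
    wp φ g up = guardReduce g (upInvA up φ) := by
  unfold wp guardReduce
  cases upInvA up φ <;> rfl

section Bounds

variable {g : Guard X} {up : Update X} {M L : ℕ}

theorem minUpperG_le (hg : ∀ ψ ∈ g, ψ.cst ≤ M) {x : X} (h : hasUpperG g x) :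
    minUpperG g x ≤ M := by
  obtain ⟨o, c, hc⟩ := h
  have hmem : c ∈ {c | ∃ o, AC.upper x o c ∈ g} := ⟨o, hc⟩
  exact (Nat.sInf_le hmem).trans (hg _ hc)

theorem cst_guardReduce_le (hg : ∀ ψ ∈ g, ψ.cst ≤ M) (ψ : AC X) :
    (guardReduce g ψ).cst ≤ max M ψ.cst := by
  cases ψ <;> simp only [guardReduce] <;> (try split_ifs with h) <;>
    simp only [AC.cst, Nat.zero_le, le_max_right]
  exact (minUpperG_le hg h.1).trans (le_max_left _ _)

theorem cst_upInvA_le (hup : ∀ x, (up x).cst ≤ L) (φ : AC X) :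
    (upInvA up φ).cst ≤ φ.cst + 2 * L := by
  rcases φ with _ | _ | ⟨x, o, c⟩ | ⟨c, o, x⟩ | ⟨x, y, o, c⟩ | ⟨c, o, x, y⟩
  iterate 2 exact Nat.zero_le _
  iterate 2
    have hx := hup x
    simp only [upInvA]
    cases h : up x <;> simp only [h, Rhs.cst] at hx ⊢ <;> split_ifs <;> simp only [AC.cst] <;>
      omega
  all_goals
    have hx := hup x
    have hy := hup y
    simp only [upInvA]
    cases h : up x <;> cases h' : up y <;> simp only [h, h', Rhs.cst] at hx hy ⊢ <;>
      split_ifs <;> simp only [AC.cst] <;> omega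

theorem cst_upInvA_lower_zero_le (hup : ∀ x, (up x).cst ≤ L) (o : Ineq) (x : X) :
    (upInvA up (.lower 0 o x)).cst ≤ L := by
  have hx := hup x
  simp only [upInvA]
  cases h : up x <;> simp only [h, Rhs.cst] at hx ⊢ <;> split_ifs <;> simp only [AC.cst] <;> omega

theorem cst_wp_le (hg : ∀ ψ ∈ g, ψ.cst ≤ M) (hup : ∀ x, (up x).cst ≤ L) (φ : AC X) :
    (wp φ g up).cst ≤ max M (φ.cst + 2 * L) := by
  rw [wp_eq_guardReduce]
  exact (cst_guardReduce_le hg _).trans (max_le_max le_rfl (cst_upInvA_le hup φ))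

theorem cst_wp_lower_zero_le (hg : ∀ ψ ∈ g, ψ.cst ≤ M) (hup : ∀ x, (up x).cst ≤ L)
    (x : X) :
    (wp (.lower 0 .le x) g up).cst ≤ max M L := by
  rw [wp_eq_guardReduce]
  exact (cst_guardReduce_le hg _).trans (max_le_max le_rfl (cst_upInvA_lower_zero_le hup _ _))

end Bounds

namespace Ctx

def isUpper : Ctx X → Bool
  | upper _ => true
  | dUpper _ _ => true
  | _ => false

def isDiag : Ctx X → Bool
  | dUpper _ _ => true
  | dLower _ _ => true
  | _ => false

def clocks : Ctx X → X × X
  | upper x => (x, x)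
  | lower x => (x, x)
  | dUpper x y => (x, y)
  | dLower x y => (x, y)

def IsSelfDiag (ctx : Ctx X) : Prop := ctx.isDiag ∧ ctx.clocks.1 = ctx.clocks.2

@[simp] theorem cst_fill (ctx : Ctx X) (c : ℕ) : (ctx.fill c).cst = c := by
  cases ctx <;> rfl

theorem fill_ne_tt (ctx : Ctx X) (c : ℕ) : ctx.fill c ≠ .tt := by
  cases ctx <;> simp [fill]

theorem fill_ne_ff (ctx : Ctx X) (c : ℕ) : ctx.fill c ≠ .ff := by
  cases ctx <;> simp [fill]

theorem fill_inj {ctx ctx' : Ctx X} {c c' : ℕ} (h : ctx.fill c = ctx'.fill c') :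
    ctx = ctx' ∧ c = c' := by
  cases ctx <;> cases ctx' <;> simp_all [fill]

theorem isDiag_fill (ctx : Ctx X) (c : ℕ) : (ctx.fill c).isDiag ↔ ctx.isDiag := by
  cases ctx <;> simp [fill, isDiag, AC.isDiag]

theorem clocks_eq_of_not_isDiag {ctx : Ctx X} (h : ¬ ctx.isDiag) :
    ctx.clocks.1 = ctx.clocks.2 := by
  cases ctx <;> simp_all [isDiag, clocks]

theorem eq_of_clocks_eq {ctx ctx' : Ctx X} (hu : ctx.isUpper = ctx'.isUpper)
    (hd : ctx.isDiag = ctx'.isDiag) (h : ctx.clocks = ctx'.clocks) : ctx = ctx' := by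
  cases ctx <;> cases ctx' <;> simp_all [isUpper, isDiag, clocks]

end Ctx

theorem AC.exists_fill {φ : AC X} (hw : φ.isWeak) (htt : φ ≠ .tt) (hff : φ ≠ .ff) :
    ∃ ctx c, Ctx.fill ctx c = φ := by
  cases φ with
  | tt => exact absurd rfl htt
  | ff => exact absurd rfl hff
  | upper x o c => exact ⟨.upper x, c, by rw [show o = .le from hw]; rfl⟩
  | lower c o x => exact ⟨.lower x, c, by rw [show o = .le from hw]; rfl⟩
  | dUpper x y o c => exact ⟨.dUpper x y, c, by rw [show o = .le from hw]; rfl⟩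
  | dLower c o x y => exact ⟨.dLower x y, c, by rw [show o = .le from hw]; rfl⟩

section Shapes

variable {g : Guard X} {up : Update X}

theorem isWeak_wp {φ : AC X} (h : φ.isWeak) : (wp φ g up).isWeak := by
  have hinv : (upInvA up φ).isWeak := by
    rcases φ with _ | _ | ⟨x, o, c⟩ | ⟨c, o, x⟩ | ⟨x, y, o, c⟩ | ⟨c, o, x, y⟩ <;>
      simp only [upInvA] <;> (try cases up x) <;> (try cases up y) <;> (try dsimp only) <;>
      (try split_ifs) <;> trivial
  rw [wp_eq_guardReduce]
  cases hψ : upInvA up φ <;> rw [hψ] at hinv <;> simp only [guardReduce] <;>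
    (try split_ifs) <;> trivial

theorem isDiag_of_isDiag_wp {φ : AC X} (h : (wp φ g up).isDiag) : φ.isDiag := by
  rw [wp_eq_guardReduce] at h
  have hinv : (upInvA up φ).isDiag := by
    cases hψ : upInvA up φ <;> rw [hψ] at h <;> simp only [guardReduce] at h <;>
      (try split_ifs at h) <;> simp_all [AC.isDiag]
  revert hinv
  rcases φ with _ | _ | ⟨x, o, c⟩ | ⟨c, o, x⟩ | ⟨x, y, o, c⟩ | ⟨c, o, x, y⟩ <;>
    simp only [upInvA] <;> (try cases up x) <;> (try dsimp only) <;>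
    (try split_ifs) <;> simp [AC.isDiag]

theorem Ctx.isSelfDiag_of_wp {ctx ctx' : Ctx X} {c c' : ℕ}
    (h : wp (ctx.fill c) g up = ctx'.fill c') (hs : ctx.IsSelfDiag) : ctx'.IsSelfDiag := by
  rw [wp_eq_guardReduce] at h
  cases ctx with
  | upper x | lower x => simp [IsSelfDiag, isDiag] at hs
  | dUpper x y | dLower x y =>
    obtain rfl : x = y := hs.2
    cases hx : up x <;> cases ctx' <;>
      simp only [fill, upInvA, hx, IsSelfDiag, isDiag, clocks] at h ⊢ <;>
      split_ifs at h <;> simp only [guardReduce] at h <;> (try split_ifs at h) <;> grind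

end Shapes

section LargeConstants

variable {g : Guard X} {up : Update X} {M L : ℕ}

theorem upInvA_fill_of_lt_of_not_isDiag (hup : ∀ x, (up x).cst ≤ L) {ctx : Ctx X}
    (hd : ¬ ctx.isDiag) {c : ℕ} (hc : L < c) :
    (upInvA up (ctx.fill c)).cst ≤ L ∨ ∃ (ctx₁ : Ctx X) (c₁ : ℕ),
      ctx₁.isUpper = ctx.isUpper ∧
        ∀ Δ, upInvA up (ctx.fill (c + Δ)) = ctx₁.fill (c₁ + Δ) := by
  cases ctx with
  | dUpper x y | dLower x y => simp [Ctx.isDiag] at hd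
  | upper x | lower x =>
    have hx := hup x
    cases h : up x with
    | const a =>
      left
      simp only [Ctx.fill, upInvA, h]
      split_ifs <;> exact Nat.zero_le _
    | clock y d =>
      simp only [h, Rhs.cst] at hx
      first
        | refine .inr ⟨.upper y, (c - d).toNat, rfl, fun Δ => ?_⟩
        | refine .inr ⟨.lower y, (c - d).toNat, rfl, fun Δ => ?_⟩
      all_goals
        simp only [Ctx.fill, upInvA, h]
        rw [if_neg (by omega)]
        congr 1
        omega

theorem upInvA_fill_of_lt_of_isDiag (hup : ∀ x, (up x).cst ≤ L) {ctx : Ctx X}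
    (hd : ctx.isDiag) {c : ℕ} (hc : L < c) :
    (upInvA up (ctx.fill c)).cst ≤ L ∨ ∃ (ctx₁ : Ctx X) (c₁ : ℕ),
      ctx₁.isUpper = ctx.isUpper ∧
        ∀ Δ, upInvA up (ctx.fill (c + Δ)) = ctx₁.fill (c₁ + Δ) := by
  cases ctx with
  | upper x | lower x => simp [Ctx.isDiag] at hd
  | dUpper x y | dLower x y =>
    have hx := hup x
    have hy := hup y
    cases h : up x with
    | const a =>
      left
      cases h' : up y <;> simp only [h, h', Rhs.cst] at hx hy <;>
        simp only [Ctx.fill, upInvA, h, h'] <;> split_ifs <;> simp only [AC.cst] <;> omega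
    | clock z e =>
      cases h' : up y with
      | const b =>
        simp only [h, h', Rhs.cst] at hx hy
        first
          | refine .inr ⟨.upper z, (c + b - e).toNat, rfl, fun Δ => ?_⟩
          | refine .inr ⟨.lower z, (c + b - e).toNat, rfl, fun Δ => ?_⟩
        all_goals
          simp only [Ctx.fill, upInvA, h, h']
          rw [if_neg (by omega)]
          congr 1
          omega
      | clock w f =>
        simp only [h, h', Rhs.cst] at hx hy
        by_cases hneg : (c : ℤ) - e + f < 0
        · left
          simp only [Ctx.fill, upInvA, h, h', if_pos hneg, AC.cst]
          omega
        first
          | refine .inr ⟨.dUpper z w, (c - e + f).toNat, rfl, fun Δ => ?_⟩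
          | refine .inr ⟨.dLower z w, (c - e + f).toNat, rfl, fun Δ => ?_⟩
        all_goals
          simp only [Ctx.fill, upInvA, h, h']
          rw [if_neg (by omega)]
          congr 1
          omega

theorem case3G_iff_of_lt (hg : ∀ ψ ∈ g, ψ.cst ≤ M) {x y : X} {d : ℕ} (hd : M < d) :
    case3G g x y d ↔ hasUpperG g x ∨ ∃ o c, AC.dUpper x y o c ∈ g := by
  constructor
  · rintro (⟨o, c, hc, -⟩ | ⟨o, c, hc, -⟩ | ⟨o, e, he, hlt⟩)
    · exact .inl ⟨o, c, hc⟩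
    · exact .inr ⟨o, c, hc⟩
    · have := hg _ he
      simp only [AC.cst] at this
      omega
  · rintro (⟨o, c, hc⟩ | ⟨o, c, hc⟩)
    · exact .inl ⟨o, c, hc, (hg _ hc).trans_lt hd⟩
    · exact .inr (.inl ⟨o, c, hc, (hg _ hc).trans_lt hd⟩)

theorem guardReduce_fill_eq (hg : ∀ ψ ∈ g, ψ.cst ≤ M) {ctx ctx' : Ctx X} {d d' : ℕ}
    (h : guardReduce g (ctx.fill d) = ctx'.fill d') (hd' : M < d') :
    ctx' = ctx ∧ d' = d ∧ ∀ e, M < e → guardReduce g (ctx.fill e) = ctx.fill e := by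
  have tt_ne : (AC.tt : AC X) ≠ ctx'.fill d' := (Ctx.fill_ne_tt _ _).symm
  cases ctx with
  | upper x =>
    simp only [Ctx.fill, guardReduce] at h ⊢
    split_ifs at h with hU
    · exact absurd h tt_ne
    obtain ⟨rfl, rfl⟩ := Ctx.fill_inj (ctx := .upper x) (ctx' := ctx') (c' := d') h
    exact ⟨rfl, rfl, fun e _ => if_neg hU⟩
  | lower x =>
    simp only [Ctx.fill, guardReduce] at h ⊢
    split_ifs at h with hU
    · obtain ⟨-, rfl⟩ := Ctx.fill_inj (ctx := .lower x) (ctx' := ctx') (c' := d') h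
      exact absurd (minUpperG_le hg hU.1) (by omega)
    obtain ⟨rfl, rfl⟩ := Ctx.fill_inj (ctx := .lower x) (ctx' := ctx') (c' := d') h
    refine ⟨rfl, rfl, fun e he => if_neg fun hU' => hU ⟨hU'.1, ?_⟩⟩
    exact (minUpperG_le hg hU'.1).trans_lt hd'
  | dUpper x y =>
    simp only [Ctx.fill, guardReduce] at h ⊢
    split_ifs at h with hU
    · exact absurd h tt_ne
    obtain ⟨rfl, rfl⟩ := Ctx.fill_inj (ctx := .dUpper x y) (ctx' := ctx') (c' := d') h
    refine ⟨rfl, rfl, fun e he => if_neg ?_⟩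
    rwa [case3G_iff_of_lt hg he, ← case3G_iff_of_lt hg hd']
  | dLower x y =>
    simp only [Ctx.fill, guardReduce] at h ⊢
    split_ifs at h with hU
    · exact absurd h tt_ne
    obtain ⟨rfl, rfl⟩ := Ctx.fill_inj (ctx := .dLower x y) (ctx' := ctx') (c' := d') h
    refine ⟨rfl, rfl, fun e he => if_neg ?_⟩
    rwa [case3G_iff_of_lt hg he, ← case3G_iff_of_lt hg hd']

theorem wp_fill_shift (hg : ∀ ψ ∈ g, ψ.cst ≤ M) (hup : ∀ x, (up x).cst ≤ L)
    {ctx ctx' : Ctx X} {c c' : ℕ} (hc : max M L < c) (hc' : max M L < c')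
    (h : wp (ctx.fill c) g up = ctx'.fill c') :
    ctx'.isUpper = ctx.isUpper ∧ ∀ Δ, wp (ctx.fill (c + Δ)) g up = ctx'.fill (c' + Δ) := by
  rw [wp_eq_guardReduce] at h
  have hcL : L < c := lt_of_le_of_lt (le_max_right M L) hc
  have hcases := if hd : ctx.isDiag then upInvA_fill_of_lt_of_isDiag hup hd hcL
    else upInvA_fill_of_lt_of_not_isDiag hup hd hcL
  rcases hcases with hsmall | ⟨ctx₁, c₁, hfam, hshift⟩
  · have := cst_guardReduce_le hg (upInvA up (ctx.fill c))
    rw [h, Ctx.cst_fill] at this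
    omega
  · rw [← add_zero c, hshift, add_zero] at h
    obtain ⟨rfl, rfl, hstable⟩ :=
      guardReduce_fill_eq hg h (lt_of_le_of_lt (le_max_left M L) hc')
    exact ⟨hfam, fun Δ => by rw [wp_eq_guardReduce, hshift, hstable _ (by omega)]⟩

end LargeConstants

namespace UTA

variable (A : UTA Q X)

inductive Derivable : Q → AC X → Prop
  | guard {t : UTrans Q X} (ht : t ∈ A.trans) {φ : AC X} (hφ : φ ∈ t.guard) :
      Derivable t.src φ
  | base {t : UTrans Q X} (ht : t ∈ A.trans) (x : X) :
      Derivable t.src (wp (.lower 0 .le x) t.guard t.update)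
  | step {t : UTrans Q X} (ht : t ∈ A.trans) {φ : AC X} (h : Derivable t.tgt φ) :
      Derivable t.src (wp φ t.guard t.update)

theorem minRedGMap_eq_setOf_derivable : minRedGMap A = fun q => {φ | A.Derivable q φ} := by
  funext q
  ext φ
  simp only [minRedGMap, Set.mem_iInter, Set.mem_ofPred_eq]
  refine ⟨fun h => h _ fun t ht => ⟨fun _ => Derivable.guard ht, Derivable.base ht,
    fun _ => Derivable.step ht⟩, fun h G hG => ?_⟩
  induction h with
  | guard ht hφ => exact (hG _ ht).1 _ hφ
  | base ht x => exact (hG _ ht).2.1 x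
  | step ht _ ih => exact (hG _ ht).2.2 _ ih

variable {A}

theorem cst_le_maxGuardConst {t : UTrans Q X} (ht : t ∈ A.trans) {φ : AC X}
    (hφ : φ ∈ t.guard) : φ.cst ≤ maxGuardConst A :=
  List.le_max_of_le' 0 (List.mem_map_of_mem ht)
    (List.le_max_of_le' 0 (List.mem_map_of_mem hφ) le_rfl)

theorem cst_le_maxUpdateConst [Fintype X] {t : UTrans Q X} (ht : t ∈ A.trans) (x : X) :
    (t.update x).cst ≤ maxUpdateConst A :=
  List.le_max_of_le' 0 (List.mem_map_of_mem ht)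
    (Finset.le_sup (f := fun y => (t.update y).cst) (Finset.mem_univ x))

theorem Derivable.isWeak (hw : weakGuards A) {q : Q} {φ : AC X} (h : A.Derivable q φ) :
    φ.isWeak := by
  induction h with
  | guard ht hφ => exact hw _ ht _ hφ
  | base ht x => exact isWeak_wp rfl
  | step ht _ ih => exact isWeak_wp ih

end UTA

namespace PropSeq

variable {A : UTA Q X} {i j : ℕ} {qs : ℕ → Q} {ctxs : ℕ → Ctx X} {cs : ℕ → ℕ}

theorem mono (h : PropSeq A i j qs ctxs cs) {i' j' : ℕ} (hi : i ≤ i') (hj : j' ≤ j) :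
    PropSeq A i' j' qs ctxs cs :=
  fun k hik hkj => h k (hi.trans hik) (lt_of_lt_of_le hkj hj)

theorem extend (h : PropSeq A i j qs ctxs cs) {t : UTrans Q X} (ht : t ∈ A.trans)
    (htgt : t.tgt = qs j) {ctx : Ctx X} {c : ℕ}
    (hwp : ctx.fill c = wp ((ctxs j).fill (cs j)) t.guard t.update) :
    PropSeq A i (j + 1) (Function.update qs (j + 1) t.src) (Function.update ctxs (j + 1) ctx)
      (Function.update cs (j + 1) c) := by
  intro k hik hkj
  rcases Nat.lt_succ_iff_lt_or_eq.mp hkj with hkj | rfl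
  · obtain ⟨t', ht', hsrc, htgt', hwp'⟩ := h k hik hkj
    refine ⟨t', ht', ?_, ?_, ?_⟩ <;>
      simp only [Function.update_of_ne (show k + 1 ≠ j + 1 by omega),
        Function.update_of_ne (show k ≠ j + 1 by omega), *]
  · refine ⟨t, ht, ?_, ?_, ?_⟩ <;>
      simp only [Function.update_self, Function.update_of_ne (show k ≠ k + 1 by omega), *]

theorem derivable (h : PropSeq A i j qs ctxs cs)
    (hi : A.Derivable (qs i) ((ctxs i).fill (cs i))) {k : ℕ} (hik : i ≤ k) (hkj : k ≤ j) :
    A.Derivable (qs k) ((ctxs k).fill (cs k)) := by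
  induction k, hik using Nat.le_induction with
  | base => exact hi
  | succ k hik ih =>
    obtain ⟨t, ht, hsrc, htgt, hwp⟩ := h k hik hkj
    rw [← hsrc, hwp]
    exact .step ht (htgt ▸ ih (by omega))

theorem isDiag_of_le (h : PropSeq A i j qs ctxs cs) {k l : ℕ} (hik : i ≤ k) (hkl : k ≤ l)
    (hlj : l ≤ j) (hl : (ctxs l).isDiag) : (ctxs k).isDiag := by
  induction l, hkl using Nat.le_induction with
  | base => exact hl
  | succ l hkl ih =>
    obtain ⟨t, -, -, -, hwp⟩ := h l (by omega) hlj
    refine ih (by omega) ((Ctx.isDiag_fill _ (cs l)).mp (isDiag_of_isDiag_wp (g := t.guard)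
      (up := t.update) ?_))
    exact hwp ▸ (Ctx.isDiag_fill _ _).mpr hl

theorem isSelfDiag_of_le (h : PropSeq A i j qs ctxs cs) {k l : ℕ} (hik : i ≤ k) (hkl : k ≤ l)
    (hlj : l ≤ j) (hk : (ctxs k).IsSelfDiag) : (ctxs l).IsSelfDiag := by
  induction l, hkl using Nat.le_induction with
  | base => exact hk
  | succ l hkl ih =>
    obtain ⟨t, -, -, -, hwp⟩ := h l (by omega) hlj
    exact Ctx.isSelfDiag_of_wp hwp.symm (ih (by omega))

variable [Fintype X]

theorem cst_succ_le (h : PropSeq A i j qs ctxs cs) {k : ℕ} (hik : i ≤ k) (hkj : k < j) :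
    cs (k + 1) ≤ max (maxGuardConst A) (cs k + 2 * maxUpdateConst A) := by
  obtain ⟨t, ht, -, -, hwp⟩ := h k hik hkj
  have := cst_wp_le (fun _ => UTA.cst_le_maxGuardConst ht) (UTA.cst_le_maxUpdateConst ht)
    ((ctxs k).fill (cs k))
  rwa [← hwp, Ctx.cst_fill, Ctx.cst_fill] at this

theorem shift (h : PropSeq A i j qs ctxs cs)
    (hlarge : ∀ k, i ≤ k → k ≤ j → max (maxGuardConst A) (maxUpdateConst A) < cs k)
    (Δ : ℕ) :
    PropSeq A i j qs ctxs (fun k => cs k + Δ) := by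
  intro k hik hkj
  obtain ⟨t, ht, hsrc, htgt, hwp⟩ := h k hik hkj
  refine ⟨t, ht, hsrc, htgt, ?_⟩
  exact ((wp_fill_shift (fun _ => UTA.cst_le_maxGuardConst ht) (UTA.cst_le_maxUpdateConst ht)
    (hlarge k hik hkj.le) (hlarge (k + 1) (by omega) hkj) hwp.symm).2 Δ).symm

theorem isUpper_eq (h : PropSeq A i j qs ctxs cs)
    (hlarge : ∀ k, i ≤ k → k ≤ j → max (maxGuardConst A) (maxUpdateConst A) < cs k)
    {k : ℕ} (hik : i ≤ k) (hkj : k ≤ j) : (ctxs k).isUpper = (ctxs i).isUpper := by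
  induction k, hik using Nat.le_induction with
  | base => rfl
  | succ k hik ih =>
    obtain ⟨t, ht, -, -, hwp⟩ := h k hik hkj
    rw [← ih (by omega)]
    exact (wp_fill_shift (fun _ => UTA.cst_le_maxGuardConst ht) (UTA.cst_le_maxUpdateConst ht)
      (hlarge k hik (by omega)) (hlarge (k + 1) (by omega) hkj) hwp.symm).1

theorem eq_of_clocks_eq (h : PropSeq A i j qs ctxs cs)
    (hlarge : ∀ k, i ≤ k → k ≤ j → max (maxGuardConst A) (maxUpdateConst A) < cs k)
    {k l : ℕ} (hik : i ≤ k) (hkl : k ≤ l) (hlj : l ≤ j)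
    (hcl : (ctxs k).clocks = (ctxs l).clocks) : ctxs k = ctxs l := by
  refine Ctx.eq_of_clocks_eq ?_ ?_ hcl
  · rw [h.isUpper_eq hlarge hik (by omega), h.isUpper_eq hlarge (by omega) hlj]
  by_cases hl : (ctxs l).isDiag
  · rw [hl, h.isDiag_of_le hik hkl hlj hl]
  have hk : ¬ (ctxs k).isDiag := fun hk => hl <| (h.isSelfDiag_of_le hik hkl hlj
    ⟨hk, by rw [hcl]; exact Ctx.clocks_eq_of_not_isDiag hl⟩).1
  simp only [Bool.not_eq_true] at hk hl
  rw [hk, hl]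

theorem not_finite_of_cst_lt (h : PropSeq A i j qs ctxs cs)
    (hlarge : ∀ k, i ≤ k → k ≤ j → max (maxGuardConst A) (maxUpdateConst A) < cs k)
    (hi : A.Derivable (qs i) ((ctxs i).fill (cs i))) (hij : i ≤ j) (hq : qs i = qs j)
    (hctx : ctxs i = ctxs j) (hc : cs i < cs j) : ¬ {φ | A.Derivable (qs i) φ}.Finite := by
  have hpump : ∀ m, A.Derivable (qs i) ((ctxs i).fill (cs i + m * (cs j - cs i))) := by
    intro m
    induction m with
    | zero => simpa using hi
    | succ m ih =>
      have := (h.shift hlarge (m * (cs j - cs i))).derivable ih hij le_rfl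
      rw [← hq, ← hctx] at this
      rwa [Nat.succ_mul, ← add_assoc, add_right_comm, Nat.add_sub_cancel' hc.le]
  refine Set.infinite_of_injective_forall_mem (fun m₁ m₂ heq => ?_) hpump
  have := (Ctx.fill_inj heq).2
  exact Nat.eq_of_mul_eq_mul_right (Nat.sub_pos_of_lt hc) (by omega)

theorem cst_add_le_of_finite [Fintype Q] (h : PropSeq A i j qs ctxs cs)
    (hlarge : ∀ k, i ≤ k → k ≤ j → max (maxGuardConst A) (maxUpdateConst A) < cs k)
    (hi : A.Derivable (qs i) ((ctxs i).fill (cs i))) (hij : i ≤ j)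
    (hfin : ∀ q, {φ | A.Derivable q φ}.Finite) :
    cs j + 2 * maxUpdateConst A ≤
      cs i + 2 * maxUpdateConst A * (Fintype.card Q * (Fintype.card X * Fintype.card X)) := by
  have hrep : ∀ k l, i ≤ k → k < l → l ≤ j →
      (qs k, (ctxs k).clocks) = (qs l, (ctxs l).clocks) → cs l ≤ cs k := by
    intro k l hik hkl hlj heq
    obtain ⟨hq, hcl⟩ := Prod.mk.inj heq
    by_contra! hlt
    exact (h.mono hik hlj).not_finite_of_cst_lt (fun m hkm hml => hlarge m (by omega) (by omega))
      (h.derivable hi hik (by omega)) hkl.le hq (h.eq_of_clocks_eq hlarge hik hkl.le hlj hcl) hlt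
      (hfin _)
  have hstep : ∀ k, i ≤ k → k < j → cs (k + 1) ≤ cs k + 2 * maxUpdateConst A :=
    fun k hik hkj => (h.cst_succ_le hik hkj).trans
      (max_le (by have := hlarge k hik hkj.le; omega) le_rfl)
  simpa only [Finset.card_univ, Fintype.card_prod] using
    add_le_add_mul_card_of_step_le Finset.univ hij (fun k _ _ => Finset.mem_univ _) hstep hrep

end PropSeq

namespace UTA

variable {A : UTA Q X}

theorem Derivable.exists_propSeq [Fintype X] (hw : weakGuards A) {q : Q} {φ : AC X}
    (h : A.Derivable q φ) {ctx : Ctx X} {c : ℕ} (hφ : ctx.fill c = φ) :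
    ∃ n qs ctxs cs, PropSeq A 0 n qs ctxs cs ∧ A.Derivable (qs 0) ((ctxs 0).fill (cs 0)) ∧
      cs 0 ≤ max (maxGuardConst A) (maxUpdateConst A) ∧
      qs n = q ∧ ctxs n = ctx ∧ cs n = c := by
  induction h generalizing ctx c with
  | guard ht hψ =>
    refine ⟨0, fun _ => _, fun _ => ctx, fun _ => c, fun k _ hk => absurd hk k.not_lt_zero,
      hφ ▸ .guard ht hψ, ?_, rfl, rfl, rfl⟩
    have := cst_le_maxGuardConst ht hψ
    rw [← hφ, Ctx.cst_fill] at this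
    exact le_max_of_le_left this
  | base ht x =>
    refine ⟨0, fun _ => _, fun _ => ctx, fun _ => c, fun k _ hk => absurd hk k.not_lt_zero,
      hφ ▸ .base ht x, ?_, rfl, rfl, rfl⟩
    have := cst_wp_lower_zero_le (fun _ => cst_le_maxGuardConst ht) (cst_le_maxUpdateConst ht) x
    rwa [← hφ, Ctx.cst_fill] at this
  | @step t ht ψ hψ ih =>
    have htt : ψ ≠ .tt := by rintro rfl; exact Ctx.fill_ne_tt ctx c hφ
    have hff : ψ ≠ .ff := by rintro rfl; exact Ctx.fill_ne_ff ctx c hφ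
    obtain ⟨ctx₀, c₀, hψ₀⟩ := AC.exists_fill (hψ.isWeak hw) htt hff
    obtain ⟨n, qs, ctxs, cs, hseq, h0, hc0, hqn, rfl, rfl⟩ := ih hψ₀
    have hn : (0 : ℕ) ≠ n + 1 := (Nat.succ_ne_zero n).symm
    refine ⟨n + 1, _, _, _, hseq.extend ht hqn.symm (hφ.trans (hψ₀ ▸ rfl)), ?_, ?_,
      Function.update_self .., Function.update_self .., Function.update_self ..⟩
    · simpa only [Function.update_of_ne hn] using h0
    · simpa only [Function.update_of_ne hn] using hc0

theorem Derivable.exists_not_finite [Fintype Q] [Fintype X] (hw : weakGuards A) {q : Q}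
    {φ : AC X} (h : A.Derivable q φ)
    (hφ : max (maxGuardConst A) (maxUpdateConst A) +
      2 * maxUpdateConst A * Fintype.card Q * Fintype.card X ^ 2 < φ.cst) :
    ∃ q', ¬ {ψ | A.Derivable q' ψ}.Finite := by
  set K := max (maxGuardConst A) (maxUpdateConst A)
  have hpos : 0 < φ.cst := by omega
  obtain ⟨ctx, c, hfill⟩ := AC.exists_fill (h.isWeak hw)
    (by rintro rfl; exact hpos.ne rfl) (by rintro rfl; exact hpos.ne rfl)
  obtain ⟨n, qs, ctxs, cs, hseq, h0, hc0, -, rfl, rfl⟩ := h.exists_propSeq hw hfill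
  subst hfill
  rw [Ctx.cst_fill] at hφ
  set p := Nat.findGreatest (fun k => cs k ≤ K) n
  have hp : cs p ≤ K := Nat.findGreatest_spec (P := fun k => cs k ≤ K) (Nat.zero_le n) hc0
  have hpn : p < n := lt_of_le_of_ne (Nat.findGreatest_le n) fun he => by rw [he] at hp; omega
  have hlarge : ∀ k, p + 1 ≤ k → k ≤ n → K < cs k := fun k hk hkn =>
    not_le.mp (Nat.findGreatest_is_greatest (P := fun k => cs k ≤ K) (by omega) hkn)
  by_contra! hfin
  have hrise := (hseq.mono (Nat.zero_le _) le_rfl).cst_add_le_of_finite hlarge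
    (hseq.derivable h0 (Nat.zero_le _) hpn) hpn hfin
  have hjump : cs (p + 1) ≤ K + 2 * maxUpdateConst A :=
    (hseq.cst_succ_le (Nat.zero_le p) hpn).trans (max_le (by omega) (by omega))
  have : 2 * maxUpdateConst A * (Fintype.card Q * (Fintype.card X * Fintype.card X)) =
      2 * maxUpdateConst A * Fintype.card Q * Fintype.card X ^ 2 := by ring
  omega

end UTA

/-- Proposition `termination-large-constant`. For a UTA whose
guards use only weak inequalities, the smallest reduced G-map is infinite at some
state iff it contains, at some state, a constraint whose constant exceeds
`max(M,L) + 2·L·|Q|·|X|²`. -/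
theorem stmt14 {Q X : Type} [Fintype Q] [Fintype X] (A : UTA Q X)
    (hw : weakGuards A) :
    (∃ q, ¬ (minRedGMap A q).Finite) ↔
    (∃ q φ, φ ∈ minRedGMap A q ∧
        max (maxGuardConst A) (maxUpdateConst A) +
          2 * maxUpdateConst A * Fintype.card Q * Fintype.card X ^ 2 < AC.cst φ) := by
  rw [UTA.minRedGMap_eq_setOf_derivable]
  constructor
  · rintro ⟨q, hq⟩
    by_contra! hsmall
    exact hq ((AC.finite_setOf_cst_le _).subset fun φ hφ => hsmall q φ hφ)
  · rintro ⟨q, φ, hφ, hlarge⟩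
    exact hφ.exists_not_finite hw hlarge
end

section
/- For every run (ℓ₀, 0) → (ℓ₁, c₁) → ⋯ → (ℓ_n, c_n) of the bounded one-counter automaton B, the sequence (ℓ₀, x − y ≤ 0) → (ℓ₁, x − y ≤ c₁) → ⋯ → (ℓ_n, x − y ≤ c_n) is a propagation sequence in the UTA A_B. -/
open Classical

/-- A bounded one-counter automaton. -/
structure BCA (L : Type) where
  init : L
  bound : ℕ
  trans : List (L × ℤ × L)
  hbound : ∀ d ∈ trans, d.2.1.natAbs ≤ bound

/-- A run of a bounded one-counter automaton. -/
def BCA.IsRun {L : Type} (B : BCA L) (n : ℕ) (ls : ℕ → L) (cs : ℕ → ℤ) : Prop :=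
  ls 0 = B.init ∧ cs 0 = 0 ∧ (∀ i, i ≤ n → 0 ≤ cs i ∧ cs i ≤ (B.bound : ℤ)) ∧
  ∀ i, i < n → ∃ p : ℤ, (ls i, p, ls (i + 1)) ∈ B.trans ∧ cs (i + 1) = cs i + p

/-- The identity update on the two clocks `x = 0` and `y = 1`. -/
def idUp : Update (Fin 2) := fun z => Rhs.clock z 0

/-- The UTA `A_B` built from a bounded one-counter automaton `B` and a target
state `ℓ_t`.  The fresh states `ℓ₀'` and `ℓ_t'` are `Sum.inr false` and
`Sum.inr true`; the clocks are `x = 0` and `y = 1`. -/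
def mkAB {L : Type} (B : BCA L) (lt : L) : UTA (L ⊕ Bool) (Fin 2) where
  init := Sum.inl B.init
  acc := ∅
  trans :=
    (B.trans.map fun d =>
      { src := Sum.inl d.2.2
        guard := [AC.upper 0 .le B.bound, AC.upper 1 .le 0]
        update := fun z => if z = (0 : Fin 2) then Rhs.clock 0 (-d.2.1) else Rhs.clock z 0
        tgt := Sum.inl d.1 }) ++
    [ { src := Sum.inl B.init, guard := [AC.dUpper 0 1 .le 0], update := idUp,
        tgt := Sum.inr false },
      { src := Sum.inr true, guard := [], update := idUp, tgt := Sum.inl lt },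
      { src := Sum.inr true, guard := [],
        update := fun z => if z = (1 : Fin 2) then Rhs.clock 1 1 else Rhs.clock z 0,
        tgt := Sum.inr true } ]

/-! The transition of `A_B` reversing a counter step `(ℓ, p, ℓ')` updates `x := x - p`, so
`up⁻¹` turns `x - y ≤ c` into `x - y ≤ c + p`. Its guard `x ≤ b ∧ y ≤ 0` bounds `x` only by
`b ≥ c + p` and carries no diagonal constraint, so Case 3 of `wp` does not apply and `wp`
is just `up⁻¹`, as long as the counter stays in `[0, b]`, which a run guarantees. -/

section Wp

variable {X : Type}

theorem upInvA_dUpper_of_clock {up : Update X} {x y z w : X} {e f : ℤ} {o : Ineq} {c : ℕ}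
    (hx : up x = .clock z e) (hy : up y = .clock w f) (hc : 0 ≤ (c : ℤ) - e + f) :
    upInvA up (.dUpper x y o c) = .dUpper z w o ((c : ℤ) - e + f).toNat := by
  simp only [upInvA, hx, hy, if_neg (not_lt.2 hc)]

theorem wp_of_upInvA_eq_dUpper {φ : AC X} {g : Guard X} {up : Update X} {x y : X} {o : Ineq}
    {d : ℕ} (h : upInvA up φ = .dUpper x y o d) (hg : ¬ case3G g x y d) :
    wp φ g up = .dUpper x y o d := by
  simp only [wp, h, if_neg hg]

theorem not_case3G_pair_upper {x y : X} (hxy : x ≠ y) {o o' : Ineq} {b a d : ℕ}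
    (hd : d ≤ b) : ¬ case3G [.upper x o b, .upper y o' a] x y d := by
  rintro (⟨_, _, hm, hlt⟩ | ⟨_, _, hm, -⟩ | ⟨_, _, hm, -⟩) <;>
    simp only [List.mem_cons, List.not_mem_nil, or_false, AC.upper.injEq,
      reduceCtorEq] at hm
  rcases hm with ⟨-, -, rfl⟩ | ⟨rfl, -⟩
  exacts [absurd hd (not_le.2 hlt), hxy rfl]

end Wp

section CounterToTimed

variable {L : Type}

def counterTrans (B : BCA L) (d : L × ℤ × L) : UTrans (L ⊕ Bool) (Fin 2) where
  src := Sum.inl d.2.2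
  guard := [AC.upper 0 .le B.bound, AC.upper 1 .le 0]
  update := fun z => if z = (0 : Fin 2) then Rhs.clock 0 (-d.2.1) else Rhs.clock z 0
  tgt := Sum.inl d.1

theorem counterTrans_mem_mkAB {B : BCA L} (lt : L) {d : L × ℤ × L} (hd : d ∈ B.trans) :
    counterTrans B d ∈ (mkAB B lt).trans :=
  List.mem_append_left _ (List.mem_map_of_mem hd)

theorem wp_counterTrans (B : BCA L) (ℓ ℓ' : L) {p : ℤ} {c : ℕ}
    (hnonneg : 0 ≤ (c : ℤ) + p) (hbound : (c : ℤ) + p ≤ B.bound) :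
    wp (.dUpper 0 1 .le c) (counterTrans B (ℓ, p, ℓ')).guard (counterTrans B (ℓ, p, ℓ')).update
      = .dUpper 0 1 .le ((c : ℤ) + p).toNat := by
  have hup : upInvA (counterTrans B (ℓ, p, ℓ')).update (.dUpper 0 1 .le c)
      = .dUpper 0 1 .le ((c : ℤ) + p).toNat := by
    have hx : (counterTrans B (ℓ, p, ℓ')).update 0 = .clock 0 (-p) := rfl
    have hy : (counterTrans B (ℓ, p, ℓ')).update 1 = .clock 1 0 := rfl
    rw [upInvA_dUpper_of_clock hx hy (by omega), sub_neg_eq_add, add_zero]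
  exact wp_of_upInvA_eq_dUpper hup (not_case3G_pair_upper (by decide) (by omega))

end CounterToTimed

theorem stmt17_general {L : Type} (B : BCA L) (lt : L) (n : ℕ)
    (ls : ℕ → L) (cs : ℕ → ℤ) (h : B.IsRun n ls cs) :
    PropSeq (mkAB B lt) 0 n (fun i => Sum.inl (ls i)) (fun _ => Ctx.dUpper 0 1)
      (fun i => (cs i).toNat) := by
  obtain ⟨-, -, hbounds, hstep⟩ := h
  intro k _ hk
  obtain ⟨p, hp, hc⟩ := hstep k hk
  have hk_nonneg := (hbounds k hk.le).1
  obtain ⟨hk1_nonneg, hk1_bound⟩ := hbounds (k + 1) hk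
  have hcount : ((cs k).toNat : ℤ) + p = cs (k + 1) := by omega
  refine ⟨counterTrans B (ls k, p, ls (k + 1)), counterTrans_mem_mkAB lt hp, rfl, rfl, ?_⟩
  show Ctx.fill _ (cs (k + 1)).toNat = wp (Ctx.fill _ (cs k).toNat) _ _
  rw [Ctx.fill, Ctx.fill, wp_counterTrans B _ _ (by omega) (by omega), hcount]

/-- Lemma `counter-to-timed`. Every run of `B` yields a
propagation sequence `(ℓ₀, x−y ≤ 0) → ⋯ → (ℓ_n, x−y ≤ c_n)` in `A_B`. -/
theorem stmt17 {L : Type} [Fintype L] (B : BCA L) (lt : L) (n : ℕ)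
    (ls : ℕ → L) (cs : ℕ → ℤ) (h : B.IsRun n ls cs) :
    PropSeq (mkAB B lt) 0 n (fun i => Sum.inl (ls i)) (fun _ => Ctx.dUpper 0 1)
      (fun i => (cs i).toNat) :=
  stmt17_general B lt n ls cs h
end

section
/- For every propagation sequence (ℓ₀, x − y ≤ 0) → (ℓ₁, x − y ≤ c₁) → ⋯ → (ℓ_n, x − y ≤ c_n) in the UTA A_B with ℓ_i ∈ L for all 0 ≤ i ≤ n, the sequence (ℓ₀, 0) → (ℓ₁, c₁) → ⋯ → (ℓ_n, c_n) is a run of the bounded one-counter automaton B. -/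
open Classical

def counterGuard (b : ℕ) : Guard (Fin 2) := [AC.upper 0 .le b, AC.upper 1 .le 0]

def counterUpdate (p : ℤ) : Update (Fin 2) :=
  fun z => if z = (0 : Fin 2) then Rhs.clock 0 (-p) else Rhs.clock z 0

lemma case3G_counterGuard_iff (b d : ℕ) : case3G (counterGuard b) 0 1 d ↔ b < d := by
  constructor
  · rintro (⟨o, c, hc, hlt⟩ | ⟨o, c, hc, -⟩ | ⟨o, e, hc, -⟩) <;> simp [counterGuard] at hc
    omega
  · exact fun hb => Or.inl ⟨.le, b, by simp [counterGuard], hb⟩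

lemma case3G_counterGuard_swap (b : ℕ) {d : ℕ} (hd : 0 < d) : case3G (counterGuard b) 1 0 d :=
  Or.inl ⟨.le, 0, by simp [counterGuard], hd⟩

lemma upInvA_counterUpdate (c : ℕ) (p : ℤ) :
    upInvA (counterUpdate p) (AC.dUpper 0 1 .le c) =
      if (c : ℤ) + p < 0 then AC.dLower (-((c : ℤ) + p)).toNat .le 1 0
      else AC.dUpper 0 1 .le ((c : ℤ) + p).toNat := by
  simp [upInvA, counterUpdate]

/-- Reversing a counter step turns `x - y ≤ c` into `x - y ≤ c + p`; the guard makes it `⊤`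
as soon as `c + p` leaves `[0, b]` (through `y ≤ 0` below, through `x ≤ b` above). -/
lemma wp_counter (b c : ℕ) (p : ℤ) :
    wp (AC.dUpper 0 1 .le c) (counterGuard b) (counterUpdate p) =
      if 0 ≤ (c : ℤ) + p ∧ (c : ℤ) + p ≤ b then AC.dUpper 0 1 .le ((c : ℤ) + p).toNat
      else .tt := by
  by_cases hneg : (c : ℤ) + p < 0
  · have h3 := case3G_counterGuard_swap b (d := (-((c : ℤ) + p)).toNat) (by omega)
    simp only [wp, upInvA_counterUpdate, if_pos hneg]
    rw [if_pos h3, if_neg (by omega)]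
  · have h3 := case3G_counterGuard_iff b ((c : ℤ) + p).toNat
    by_cases hb : (c : ℤ) + p ≤ b
    · simp only [wp, upInvA_counterUpdate, if_neg hneg, h3]
      rw [if_neg (by omega), if_pos (by omega)]
    · simp only [wp, upInvA_counterUpdate, if_neg hneg, h3]
      rw [if_pos (by omega), if_neg (by omega)]

lemma eq_add_of_wp_counter {b c c' : ℕ} {p : ℤ}
    (h : AC.dUpper 0 1 .le c' = wp (AC.dUpper 0 1 .le c) (counterGuard b) (counterUpdate p)) :
    (c' : ℤ) = c + p ∧ c' ≤ b := by
  rw [wp_counter] at h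
  split_ifs at h
  cases h
  omega

lemma mkAB_trans_of_inl {L : Type} {B : BCA L} {lt ℓ ℓ' : L} {t : UTrans (L ⊕ Bool) (Fin 2)}
    (ht : t ∈ (mkAB B lt).trans) (hsrc : t.src = .inl ℓ') (htgt : t.tgt = .inl ℓ) :
    ∃ p, (ℓ, p, ℓ') ∈ B.trans ∧ t.guard = counterGuard B.bound ∧ t.update = counterUpdate p := by
  simp only [mkAB, List.mem_append, List.mem_map, List.mem_cons, List.not_mem_nil,
    or_false] at ht
  rcases ht with ⟨d, hd, rfl⟩ | rfl | rfl | rfl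
  · simp only [Sum.inl.injEq] at hsrc htgt
    exact ⟨d.2.1, by rwa [← htgt, ← hsrc], rfl, rfl⟩
  · cases htgt
  · cases hsrc
  · cases hsrc

lemma step_of_propSeq_mkAB {L : Type} {B : BCA L} {lt : L} {n : ℕ} {ls : ℕ → L} {cs : ℕ → ℕ}
    (h : PropSeq (mkAB B lt) 0 n (fun i => .inl (ls i)) (fun _ => .dUpper 0 1) cs)
    {k : ℕ} (hk : k < n) :
    ∃ p : ℤ, (ls k, p, ls (k + 1)) ∈ B.trans ∧
      (cs (k + 1) : ℤ) = cs k + p ∧ cs (k + 1) ≤ B.bound := by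
  obtain ⟨t, ht, hsrc, htgt, hwp⟩ := h k k.zero_le hk
  obtain ⟨p, hp, hg, hu⟩ := mkAB_trans_of_inl ht hsrc htgt
  rw [hg, hu] at hwp
  exact ⟨p, hp, eq_add_of_wp_counter hwp⟩

theorem stmt18_general {L : Type} (B : BCA L) (lt : L) (n : ℕ)
    (ls : ℕ → L) (cs : ℕ → ℕ)
    (h : PropSeq (mkAB B lt) 0 n (fun i => Sum.inl (ls i)) (fun _ => Ctx.dUpper 0 1) cs)
    (h0 : ls 0 = B.init) (hc0 : cs 0 = 0) :
    B.IsRun n ls (fun i => (cs i : ℤ)) := by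
  refine ⟨h0, by simp [hc0], fun i hi => ⟨Int.natCast_nonneg _, ?_⟩, fun i hi => ?_⟩
  · rcases i with _ | j
    · simp [hc0]
    · obtain ⟨-, -, -, hb⟩ := step_of_propSeq_mkAB h (k := j) (by omega)
      exact Int.ofNat_le.mpr hb
  · obtain ⟨p, hp, hcs, -⟩ := step_of_propSeq_mkAB h hi
    exact ⟨p, hp, hcs⟩

/-- Lemma `timed-to-counter`. Every propagation sequence
`(ℓ₀, x−y ≤ 0) → ⋯ → (ℓ_n, x−y ≤ c_n)` in `A_B` through states of `L` yields a
run `(ℓ₀, 0) → ⋯ → (ℓ_n, c_n)` of `B`. -/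
theorem stmt18 {L : Type} [Fintype L] (B : BCA L) (lt : L) (n : ℕ)
    (ls : ℕ → L) (cs : ℕ → ℕ)
    (h : PropSeq (mkAB B lt) 0 n (fun i => Sum.inl (ls i)) (fun _ => Ctx.dUpper 0 1) cs)
    (h0 : ls 0 = B.init) (hc0 : cs 0 = 0) :
    B.IsRun n ls (fun i => (cs i : ℤ)) :=
  stmt18_general B lt n ls cs h h0 hc0
end

section
/- The target state ℓ_t is reachable in the bounded one-counter automaton B (i.e., some run of B ends in state ℓ_t) if and only if the smallest reduced G-map of the UTA A_B assigns an infinite set of atomic constraints to some state. -/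
open Classical

/-!
Read backwards, the transition of `A_B` simulating `(ℓ, p, ℓ')` sends `x - y ≤ c` to
`x - y ≤ c + p` under `wp`, and its guard `x ≤ b ∧ y ≤ 0` turns this into `⊤` exactly when
`c + p` leaves `[0, b]`. Starting from the guard `x - y ≤ 0` at `ℓ₀`, every reduced G-map therefore
contains `x - y ≤ c` at `ℓ` whenever the counter value `c` is reachable at `ℓ`. If `ℓ_t` is
reachable, this constraint passes to `ℓ_t'`, where the self-loop `y := y + 1` pumps it to
`x - y ≤ c + m` for every `m`. Conversely, if `ℓ_t` is unreachable, the non-diagonal constraints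
with constants at most `b`, together with `x - y ≤ c` at `ℓ` for every counter value `c`
reachable at `ℓ`, form a finite reduced G-map.
-/

section GMap

variable {Q X : Type}

lemma mem_minRedGMap {A : UTA Q X} {q : Q} {φ : AC X} :
    φ ∈ minRedGMap A q ↔ ∀ G, IsRedGMap A G → φ ∈ G q := by
  simp [minRedGMap]

lemma minRedGMap_subset {A : UTA Q X} {G : Q → Set (AC X)} (hG : IsRedGMap A G) (q : Q) :
    minRedGMap A q ⊆ G q :=
  fun _ hφ => mem_minRedGMap.1 hφ G hG

end GMap

section WeakestPrecondition

variable {X : Type}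

lemma upInvA_eq_self {up : Update X} (hup : ∀ x, up x = .clock x 0) (φ : AC X) :
    upInvA up φ = φ := by
  cases φ <;> simp [upInvA, hup]

lemma wp_nil (φ : AC X) (up : Update X) : wp φ [] up = upInvA up φ := by
  unfold wp
  split <;> simp_all [hasUpperG, case3G]

lemma wp_lower_zero_eq_self {up : Update X} (hup : ∀ x, up x = .clock x 0) (g : Guard X)
    (o : Ineq) (x : X) : wp (.lower 0 o x) g up = .lower 0 o x := by
  simp [wp, upInvA_eq_self hup]

def nonDiagUpTo (b : ℕ) : Set (AC X) := {φ | ¬ φ.isDiag ∧ φ.cst ≤ b}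

@[simp] lemma mem_nonDiagUpTo {b : ℕ} {φ : AC X} :
    φ ∈ nonDiagUpTo b ↔ ¬ φ.isDiag ∧ φ.cst ≤ b :=
  Iff.rfl

lemma finite_nonDiagUpTo [Finite X] (b : ℕ) : (nonDiagUpTo b : Set (AC X)).Finite := by
  have : Finite Ineq := Finite.of_surjective (fun o : Bool => if o then Ineq.le else Ineq.lt)
    (by rintro (_ | _) <;> simp)
  have hsub : nonDiagUpTo b ⊆ {.tt, .ff} ∪
      ⋃ (x : X) (o : Ineq) (c : Fin (b + 1)), {.upper x o c, .lower c o x} := by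
    rintro (_ | _ | ⟨x, o, c⟩ | ⟨c, o, x⟩ | _ | _) ⟨hdiag, hc⟩ <;>
      simp only [AC.isDiag, AC.cst, not_true_eq_false] at hdiag hc
    all_goals simp [Fin.exists_iff] <;> omega
  exact (Set.toFinite _).subset hsub

lemma not_isDiag_upInvA (up : Update X) {φ : AC X} (hφ : ¬ φ.isDiag) :
    ¬ (upInvA up φ).isDiag := by
  rcases φ with _ | _ | ⟨x, o, c⟩ | ⟨c, o, x⟩ | _ | _
  · exact hφ
  · exact hφ
  all_goals simp only [upInvA]
  · split <;> split_ifs <;> simp [AC.isDiag]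
  · split <;> split_ifs <;> simp [AC.isDiag]
  all_goals exact absurd trivial hφ

lemma upInvA_mem_nonDiagUpTo {up : Update X}
    (hup : ∀ x, ∃ (y : X) (d : ℕ), up x = .clock y d) {b : ℕ} {φ : AC X}
    (hφ : φ ∈ nonDiagUpTo b) : upInvA up φ ∈ nonDiagUpTo b := by
  obtain ⟨hdiag, hb⟩ := hφ
  rcases φ with _ | _ | ⟨x, o, c⟩ | ⟨c, o, x⟩ | _ | _
  · exact ⟨hdiag, hb⟩
  · exact ⟨hdiag, hb⟩
  · obtain ⟨y, d, hx⟩ := hup x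
    simp only [upInvA, hx]
    split_ifs <;> simp [AC.isDiag, AC.cst] at hb ⊢; omega
  · obtain ⟨y, d, hx⟩ := hup x
    simp only [upInvA, hx]
    split_ifs <;> simp [AC.isDiag, AC.cst] at hb ⊢; omega
  all_goals exact absurd trivial hdiag

/-- A guard bounding every clock from above by at most `b` makes `wp` of a non-diagonal
constraint either `⊤` (Case 1) or a lower bound clamped to at most `b` (Case 2). -/
lemma wp_mem_nonDiagUpTo {g : Guard X} {b : ℕ}
    (hg : ∀ x, hasUpperG g x ∧ minUpperG g x ≤ b) {up : Update X} {φ : AC X}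
    (hφ : ¬ (upInvA up φ).isDiag) : wp φ g up ∈ nonDiagUpTo b := by
  unfold wp
  cases h : upInvA up φ with
  | tt | ff => simp [AC.isDiag, AC.cst]
  | upper x o d => simp [(hg x).1, AC.isDiag, AC.cst]
  | lower d o x =>
    have := (hg x).2
    simp only [(hg x).1, true_and]
    split_ifs <;> simp [AC.isDiag, AC.cst] <;> omega
  | dUpper | dLower => rw [h] at hφ; exact absurd trivial hφ

end WeakestPrecondition

namespace BCA

variable {L : Type}

inductive Reach (B : BCA L) : L → ℕ → Prop
  | init : Reach B B.init 0
  | step {ℓ ℓ' : L} {p : ℤ} {c c' : ℕ} : Reach B ℓ c → (ℓ, p, ℓ') ∈ B.trans →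
      (c' : ℤ) = c + p → c' ≤ B.bound → Reach B ℓ' c'

variable {B : BCA L}

lemma Reach.le_bound {ℓ : L} {c : ℕ} (h : B.Reach ℓ c) : c ≤ B.bound := by
  cases h with
  | init => exact Nat.zero_le _
  | step _ _ _ hc => exact hc

lemma IsRun.reach {n : ℕ} {ls : ℕ → L} {cs : ℕ → ℤ} (h : B.IsRun n ls cs) :
    ∀ i ≤ n, B.Reach (ls i) (cs i).toNat := by
  obtain ⟨hl0, hc0, hbound, hstep⟩ := h
  intro i hi
  induction i with
  | zero => simpa [hl0, hc0] using Reach.init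
  | succ i ih =>
    obtain ⟨p, hp, hcs⟩ := hstep i hi
    have := hbound i (by omega)
    have := hbound (i + 1) hi
    exact (ih (by omega)).step hp (by omega) (by omega)

lemma Reach.exists_run {ℓ : L} {c : ℕ} (h : B.Reach ℓ c) :
    ∃ n ls cs, B.IsRun n ls cs ∧ ls n = ℓ ∧ cs n = c := by
  induction h with
  | init => exact ⟨0, fun _ => B.init, fun _ => 0, ⟨rfl, rfl, by simp, by simp⟩, rfl, rfl⟩
  | @step ℓ ℓ' p c c' _ hp hc' hb ih =>
    obtain ⟨n, ls, cs, ⟨hl0, hc0, hbound, hstep⟩, hln, hcn⟩ := ih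
    refine ⟨n + 1, fun i => if i ≤ n then ls i else ℓ', fun i => if i ≤ n then cs i else c',
      ⟨by simp [hl0], by simp [hc0], fun i hi => ?_, fun i hi => ?_⟩, by simp, by simp⟩
    · dsimp only
      split_ifs with hin
      · exact hbound i hin
      · omega
    · rcases Nat.lt_succ_iff_lt_or_eq.1 hi with hin | rfl
      · simpa [hin.le, Nat.succ_le_of_lt hin] using hstep i hin
      · simpa [hln, hcn, hc'] using hp

lemma exists_run_iff_exists_reach {ℓ : L} :
    (∃ (n : ℕ) (ls : ℕ → L) (cs : ℕ → ℤ), B.IsRun n ls cs ∧ ls n = ℓ) ↔ ∃ c, B.Reach ℓ c := by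
  constructor
  · rintro ⟨n, ls, cs, hrun, rfl⟩
    exact ⟨_, hrun.reach n le_rfl⟩
  · rintro ⟨c, hc⟩
    obtain ⟨n, ls, cs, hrun, hln, -⟩ := hc.exists_run
    exact ⟨n, ls, cs, hrun, hln⟩

end BCA

lemma idUp_apply (x : Fin 2) : idUp x = .clock x 0 := rfl

namespace mkAB

variable {L : Type}

def edgeGuard (b : ℕ) : Guard (Fin 2) := [AC.upper 0 .le b, AC.upper 1 .le 0]

def edgeUpdate (p : ℤ) : Update (Fin 2) :=
  fun z => if z = 0 then Rhs.clock 0 (-p) else Rhs.clock z 0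

def tickUpdate : Update (Fin 2) := fun z => if z = 1 then Rhs.clock 1 1 else Rhs.clock z 0

def edge (B : BCA L) (d : L × ℤ × L) : UTrans (L ⊕ Bool) (Fin 2) :=
  ⟨.inl d.2.2, edgeGuard B.bound, edgeUpdate d.2.1, .inl d.1⟩

def start (B : BCA L) : UTrans (L ⊕ Bool) (Fin 2) :=
  ⟨.inl B.init, [AC.dUpper 0 1 .le 0], idUp, .inr false⟩

def exit (lt : L) : UTrans (L ⊕ Bool) (Fin 2) := ⟨.inr true, [], idUp, .inl lt⟩

def tick : UTrans (L ⊕ Bool) (Fin 2) := ⟨.inr true, [], tickUpdate, .inr true⟩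

lemma mem_trans {B : BCA L} {lt : L} {t : UTrans (L ⊕ Bool) (Fin 2)} :
    t ∈ (mkAB B lt).trans ↔
      (∃ d ∈ B.trans, edge B d = t) ∨ t = start B ∨ t = exit lt ∨ t = tick := by
  simp only [mkAB, List.mem_append, List.mem_map, List.mem_cons, List.not_mem_nil, or_false]
  rfl

lemma edgeGuard_upper_le (b : ℕ) (x : Fin 2) :
    hasUpperG (edgeGuard b) x ∧ minUpperG (edgeGuard b) x ≤ b := by
  fin_cases x <;> simp [hasUpperG, minUpperG, edgeGuard]

lemma tickUpdate_eq_clock (x : Fin 2) : ∃ (y : Fin 2) (d : ℕ), tickUpdate x = .clock y d := by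
  fin_cases x
  · exact ⟨0, 0, rfl⟩
  · exact ⟨1, 1, rfl⟩

lemma wp_edge_dUpper (b : ℕ) (p : ℤ) (o : Ineq) (c : ℕ) :
    wp (.dUpper 0 1 o c) (edgeGuard b) (edgeUpdate p) =
      if 0 ≤ (c : ℤ) + p ∧ (c : ℤ) + p ≤ b then .dUpper 0 1 o ((c : ℤ) + p).toNat else .tt := by
  simp only [wp, upInvA, edgeUpdate, Fin.isValue, ↓reduceIte, one_ne_zero, sub_neg_eq_add,
    add_zero, neg_add_rev]
  split_ifs <;> simp_all [case3G, edgeGuard] <;> omega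

lemma wp_tick_dUpper (o : Ineq) (c : ℕ) :
    wp (.dUpper 0 1 o c) [] tickUpdate = .dUpper 0 1 o (c + 1) := by
  simp only [wp_nil, upInvA, tickUpdate, Fin.isValue, zero_ne_one, ↓reduceIte, sub_zero,
    Int.toNat_natCast_add_one, ite_eq_right_iff, reduceCtorEq, imp_false, not_lt]
  omega

variable {B : BCA L} {lt : L}

lemma edge_mem {d : L × ℤ × L} (hd : d ∈ B.trans) : edge B d ∈ (mkAB B lt).trans :=
  mem_trans.2 (Or.inl ⟨d, hd, rfl⟩)

lemma dUpper_mem_of_reach {G : L ⊕ Bool → Set (AC (Fin 2))} (hG : IsRedGMap (mkAB B lt) G)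
    {ℓ : L} {c : ℕ} (h : B.Reach ℓ c) : AC.dUpper 0 1 .le c ∈ G (.inl ℓ) := by
  induction h with
  | init => exact (hG (start B) (mem_trans.2 (by simp))).1 _ (List.mem_singleton_self _)
  | @step ℓ ℓ' p c c' _ hp hc' hb ih =>
    have h := (hG _ (edge_mem hp)).2.2 _ ih
    simp only [edge, wp_edge_dUpper] at h
    rwa [if_pos (by omega), show ((c : ℤ) + p).toNat = c' by omega] at h

lemma dUpper_add_mem_tick {G : L ⊕ Bool → Set (AC (Fin 2))} (hG : IsRedGMap (mkAB B lt) G)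
    {c : ℕ} (hc : AC.dUpper 0 1 .le c ∈ G (.inl lt)) :
    ∀ m : ℕ, AC.dUpper 0 1 .le (c + m) ∈ G (.inr true)
  | 0 => by
    simpa [exit, wp_nil, upInvA_eq_self idUp_apply] using
      (hG (exit lt) (mem_trans.2 (by simp))).2.2 _ hc
  | m + 1 => by
    simpa [tick, wp_tick_dUpper, ← add_assoc] using
      (hG tick (mem_trans.2 (by simp))).2.2 _ (dUpper_add_mem_tick hG hc m)

lemma not_finite_minRedGMap_of_reach {c : ℕ} (h : B.Reach lt c) :
    ¬ (minRedGMap (mkAB B lt) (.inr true)).Finite :=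
  Set.infinite_of_injective_forall_mem (f := fun m : ℕ => AC.dUpper (0 : Fin 2) 1 .le (c + m))
    (fun _ _ hm => by simpa using hm)
    fun m => mem_minRedGMap.2 fun _ hG => dUpper_add_mem_tick hG (dUpper_mem_of_reach hG h) m

variable (B) in
def reachGMap : L ⊕ Bool → Set (AC (Fin 2))
  | .inl ℓ => nonDiagUpTo B.bound ∪ (fun c => AC.dUpper 0 1 .le c) '' {c | B.Reach ℓ c}
  | .inr false => ∅
  | .inr true => nonDiagUpTo B.bound

lemma finite_reachGMap (q : L ⊕ Bool) : (reachGMap B q).Finite := by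
  rcases q with ℓ | _ | _
  · exact (finite_nonDiagUpTo _).union
      (((Set.finite_Iic B.bound).subset fun _ hc => hc.le_bound).image _)
  · exact Set.finite_empty
  · exact finite_nonDiagUpTo _

lemma isRedGMap_reachGMap (h : ∀ c, ¬ B.Reach lt c) : IsRedGMap (mkAB B lt) (reachGMap B) := by
  intro t ht
  rcases mem_trans.1 ht with ⟨⟨ℓ, p, ℓ'⟩, hd, rfl⟩ | rfl | rfl | rfl
  · refine ⟨?_, fun x => ?_, fun φ hφ => ?_⟩
    · simp [edge, edgeGuard, reachGMap, AC.isDiag, AC.cst]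
    · exact Or.inl (wp_mem_nonDiagUpTo (edgeGuard_upper_le _) (not_isDiag_upInvA _ id))
    · rcases hφ with hφ | ⟨c, hc, rfl⟩
      · exact Or.inl (wp_mem_nonDiagUpTo (edgeGuard_upper_le _) (not_isDiag_upInvA _ hφ.1))
      · simp only [edge, wp_edge_dUpper]
        split_ifs with hcp
        · exact Or.inr ⟨_, BCA.Reach.step hc hd (by omega) (by omega), rfl⟩
        · exact Or.inl (by simp [AC.isDiag, AC.cst])
  · refine ⟨?_, fun x => ?_, fun φ hφ => hφ.elim⟩
    · simp [start, reachGMap, BCA.Reach.init]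
    · exact Or.inl (by simp [start, wp_lower_zero_eq_self idUp_apply, AC.isDiag, AC.cst])
  · refine ⟨by simp [exit], fun x => ?_, fun φ hφ => ?_⟩
    · simp [exit, wp_nil, upInvA_eq_self idUp_apply, reachGMap, AC.isDiag, AC.cst]
    · simpa [exit, wp_nil, upInvA_eq_self idUp_apply, reachGMap, h] using hφ
  · refine ⟨by simp [tick], fun x => ?_, fun φ hφ => ?_⟩
    · rw [tick, wp_nil]
      exact upInvA_mem_nonDiagUpTo tickUpdate_eq_clock (by simp [AC.isDiag, AC.cst])
    · rw [tick, wp_nil]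
      exact upInvA_mem_nonDiagUpTo tickUpdate_eq_clock hφ

end mkAB

theorem stmt19_general {L : Type} (B : BCA L) (lt : L) :
    (∃ (n : ℕ) (ls : ℕ → L) (cs : ℕ → ℤ), B.IsRun n ls cs ∧ ls n = lt) ↔
    (∃ q, ¬ (minRedGMap (mkAB B lt) q).Finite) := by
  rw [BCA.exists_run_iff_exists_reach]
  constructor
  · rintro ⟨c, hc⟩
    exact ⟨.inr true, mkAB.not_finite_minRedGMap_of_reach hc⟩
  · rintro ⟨q, hq⟩
    by_contra! hlt
    exact hq ((mkAB.finite_reachGMap q).subset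
      (minRedGMap_subset (mkAB.isRedGMap_reachGMap hlt) q))

/-- Proposition `diagonal-pspace-hard`. The target state `ℓ_t`
is reachable in `B` iff the smallest reduced G-map of `A_B` assigns an infinite
set to some state. -/
theorem stmt19 {L : Type} [Fintype L] (B : BCA L) (lt : L) :
    (∃ (n : ℕ) (ls : ℕ → L) (cs : ℕ → ℤ), B.IsRun n ls cs ∧ ls n = lt) ↔
    (∃ q, ¬ (minRedGMap (mkAB B lt) q).Finite) :=
  stmt19_general B lt
end
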